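/- For the component Q^{+-}(m,n,t), let p : Q_v -> Z/2Z be the group homomorphism with p(beta_i) = 1 for all i, and let Q^+(pi) denote the set of nonnegative-integer combinations of alpha_1, alpha_2, alpha_3. Then the even part of the intersection of Q^+_u over all u in Sp(v) equals Q^+(pi), and the odd part of this intersection equals delta + Q^+(pi). -/

import Mathlib

open scoped ComplexOrder

attribute [local instance] Classical.propDecidable

namespace KMS

noncomputable section

variable (X : Type*) [Fintype X] (H : Type*) [AddCommGroup H] [Module ℂ H]

/-- A root datum: maps `a : X → h`, `b : X → h*`, parity `p`, with `a`, `b`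
linearly independent families (the "injectivity" of the induced maps from the span of `X`). -/
structure RootDatum where
  a : X → H
  b : X → Module.Dual ℂ H
  p : X → ZMod 2
  lin_indep_a : LinearIndependent ℂ a
  lin_indep_b : LinearIndependent ℂ b

variable {X H}

/-- The Cartan matrix entry `a^v_{xy} = ⟨a_v(x), b_v(y)⟩`. -/
def cartan (v : RootDatum X H) (x y : X) : ℂ := v.b y (v.a x)

/-- `x` is reflectable at `v`. -/
def Reflectable (v : RootDatum X H) (x : X) : Prop :=
  (cartan v x x = 0 ∧ v.p x = 1) ∨
  (cartan v x x ≠ 0 ∧ v.p x = 0 ∧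
    ∀ y, y ≠ x → ∃ n : ℕ, 2 * cartan v x y / cartan v x x = -(n : ℂ)) ∨
  (cartan v x x ≠ 0 ∧ v.p x = 1 ∧
    ∀ y, y ≠ x → ∃ n : ℕ, cartan v x y / cartan v x x = -(n : ℂ))

/-- The anisotropic reflexion `r_x : v → v'`. -/
def IsAnisoReflexion (x : X) (v v' : RootDatum X H) : Prop :=
  Reflectable v x ∧ cartan v x x ≠ 0 ∧ v'.p = v.p ∧
  (∀ y, v'.a y = v.a y - (2 * cartan v y x / cartan v x x) • v.a x) ∧
  (∀ y, v'.b y = v.b y - (2 * cartan v x y / cartan v x x) • v.b x)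

/-- The isotropic reflexion `r_x : v → v'`. -/
def IsIsoReflexion (x : X) (v v' : RootDatum X H) : Prop :=
  Reflectable v x ∧ cartan v x x = 0 ∧
  v'.a x = -v.a x ∧ v'.b x = -v.b x ∧ v'.p x = v.p x ∧
  ∀ y, y ≠ x →
    (cartan v x y = 0 → v'.a y = v.a y ∧ v'.b y = v.b y ∧ v'.p y = v.p y) ∧
    (cartan v x y ≠ 0 →
      v'.a y = v.a y + (cartan v y x / cartan v x y) • v.a x ∧
      v'.b y = v.b y + v.b x ∧ v'.p y = v.p y + 1)

/-- A reflexion is either anisotropic or isotropic. -/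
def IsReflexion (x : X) (v v' : RootDatum X H) : Prop :=
  IsAnisoReflexion x v v' ∨ IsIsoReflexion x v v'

/-- A path of reflexions from `v` to `u`, recorded by the ordered list of its marks. -/
inductive IsPath : RootDatum X H → List X → RootDatum X H → Prop
  | nil (v : RootDatum X H) : IsPath v [] v
  | cons {v v' u : RootDatum X H} {x : X} {ms : List X} :
      IsReflexion x v v' → IsPath v' ms u → IsPath v (x :: ms) u

/-- A path of isotropic reflexions from `v` to `u`. -/
inductive IsIsoPath : RootDatum X H → List X → RootDatum X H → Prop
  | nil (v : RootDatum X H) : IsIsoPath v [] v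
  | cons {v v' u : RootDatum X H} {x : X} {ms : List X} :
      IsIsoReflexion x v v' → IsIsoPath v' ms u → IsIsoPath v (x :: ms) u

/-- The skeleton `Sk(v)`. -/
def Skeleton (v : RootDatum X H) : Set (RootDatum X H) := {u | ∃ ms : List X, IsPath v ms u}

/-- The spine `Sp(v)`. -/
def Spine (v : RootDatum X H) : Set (RootDatum X H) := {u | ∃ ms : List X, IsIsoPath v ms u}

/-- Admissibility of the component of `v`. -/
def Admissible (v : RootDatum X H) : Prop :=
  ∀ u ∈ Skeleton v, ∀ x, Reflectable u x → ∀ y, cartan u x y = 0 → cartan u y x = 0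

/-- Full reflectability of the component of `v`. -/
def FullyReflectable (v : RootDatum X H) : Prop :=
  ∀ u ∈ Skeleton v, ∀ x, Reflectable u x

/-- Anisotropic real roots. -/
def DeltaAn (v : RootDatum X H) : Set (Module.Dual ℂ H) :=
  {α | ∃ u x, u ∈ Skeleton v ∧ Reflectable u x ∧ cartan u x x ≠ 0 ∧ u.b x = α}

/-- Isotropic real roots. -/
def DeltaIs (v : RootDatum X H) : Set (Module.Dual ℂ H) :=
  {α | ∃ u x, u ∈ Skeleton v ∧ Reflectable u x ∧ cartan u x x = 0 ∧ u.b x = α}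

/-- The coroot `α^∨ = (2 / a^u_{xx}) a_u(x)` of an anisotropic real root
(independent of the choice of presentation). -/
def coroot (v : RootDatum X H) (α : Module.Dual ℂ H) : H :=
  if h : ∃ u x, u ∈ Skeleton v ∧ Reflectable u x ∧ cartan u x x ≠ 0 ∧ u.b x = α then
    (2 / cartan h.choose h.choose_spec.choose h.choose_spec.choose) •
      h.choose.a h.choose_spec.choose
  else 0

/-- The parity `p(α)` of an anisotropic real root. -/
def rootParity (v : RootDatum X H) (α : Module.Dual ℂ H) : ZMod 2 :=
  if h : ∃ u x, u ∈ Skeleton v ∧ Reflectable u x ∧ cartan u x x ≠ 0 ∧ u.b x = α then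
    h.choose.p h.choose_spec.choose
  else 0

/-- Principal roots: anisotropic simple roots at vertices of the spine. -/
def SigmaPr (v : RootDatum X H) : Set (Module.Dual ℂ H) :=
  {α | ∃ u x, u ∈ Spine v ∧ Reflectable u x ∧ cartan u x x ≠ 0 ∧ u.b x = α}

/-- The set `π`: even principal roots together with doubles of odd principal roots. -/
def piSet (v : RootDatum X H) : Set (Module.Dual ℂ H) :=
  {α | α ∈ SigmaPr v ∧ rootParity v α = 0} ∪
  {β | ∃ α ∈ SigmaPr v, rootParity v α = 1 ∧ β = (2 : ℂ) • α}

/-- The coroot of an element of `π` (with `(2α)^∨ = α^∨ / 2` for odd principal `α`). -/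
def piCoroot (v : RootDatum X H) (β : Module.Dual ℂ H) : H :=
  if β ∈ SigmaPr v then coroot v β else (2 : ℂ)⁻¹ • coroot v ((2 : ℂ)⁻¹ • β)

/-- The Weyl group: the subgroup of `GL(h^*)` generated by the reflections
`s_α : λ ↦ λ - ⟨α^∨, λ⟩ α` for `α ∈ Δ_an`. -/
def WeylGroup (v : RootDatum X H) :
    Subgroup (Module.Dual ℂ H ≃ₗ[ℂ] Module.Dual ℂ H) :=
  Subgroup.closure
    {w | ∃ α ∈ DeltaAn v, ∀ lam : Module.Dual ℂ H, w lam = lam - lam (coroot v α) • α}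

/-- `Q^+_u`: nonnegative integral combinations of the simple roots at `u`. -/
def QPlus (u : RootDatum X H) : Set (Module.Dual ℂ H) :=
  {μ | ∃ k : X → ℕ, μ = ∑ x, (k x : ℂ) • u.b x}

/-- `Q_u`: integral combinations of the simple roots at `u`. -/
def QLattice (u : RootDatum X H) : Set (Module.Dual ℂ H) :=
  {μ | ∃ k : X → ℤ, μ = ∑ x, (k x : ℂ) • u.b x}

/-- The convex cone of finite nonnegative real combinations of elements of `S`. -/
def coneR {M : Type*} [AddCommGroup M] [Module ℝ M] (S : Set M) : Set M :=
  {μ | ∃ (T : Finset M) (c : M → ℝ), ↑T ⊆ S ∧ (∀ m, 0 ≤ c m) ∧ μ = ∑ m ∈ T, c m • m}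

/-- The totally positive cone `Q^{++}_ℝ`. -/
def QppR (v : RootDatum X H) : Set (Module.Dual ℂ H) :=
  ⋂ u ∈ Skeleton v, coneR (Set.range u.b)

/-- Indecomposability of a square matrix. -/
def IsIndecMatrix {Y : Type*} [Fintype Y] (A : Y → Y → ℂ) : Prop :=
  Fintype.card Y = 1 ∨
  ∃ (s : ℕ) (e : Fin s ≃ Y), ∀ j : Fin s,
    A (e j) (e ⟨(j.1 + 1) % s, Nat.mod_lt _ j.pos⟩) ≠ 0

/-- Indecomposability of the component of `v`. -/
def IndecComp (v : RootDatum X H) : Prop :=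
  ∀ u ∈ Spine v, IsIndecMatrix (cartan u)

/-- The Cartan matrix at `v` as a matrix. -/
def cartanMatrix (v : RootDatum X H) : Matrix X X ℂ := Matrix.of fun x y => cartan v x y

/-- A Kac-Moody component: fully reflectable, admissible and `dim h = |X| + corank A^v`. -/
def IsKacMoodyComp (v : RootDatum X H) : Prop :=
  FullyReflectable v ∧ Admissible v ∧
  Module.finrank ℂ H = Fintype.card X + (Fintype.card X - (cartanMatrix v).rank)

/-- Type (Aff): the real span of `Q^{++}_ℝ` is one-dimensional. -/
def TypeAff (v : RootDatum X H) : Prop :=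
  Module.finrank ℝ (Submodule.span ℝ (QppR v)) = 1

/-- The set `π_S` of `S`-principal elements. -/
def piS (v : RootDatum X H) : Set (Module.Dual ℂ H) :=
  {α | ∃ u x, u ∈ Spine v ∧
    ((u.p x = 0 ∧ α = u.b x) ∨ (u.p x = 1 ∧ cartan u x x ≠ 0 ∧ α = (2 : ℂ) • u.b x))}

/-- `D`-equivalence of Cartan data. -/
def DEquivTo (u v : RootDatum X H) : Prop :=
  u.p = v.p ∧ ∃ D : X → ℂ, (∀ x, D x ≠ 0) ∧ ∀ x y, cartan u x y = D x * cartan v x y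

/-- `Sk^D(v)`. -/
def SkD (v : RootDatum X H) : Set (RootDatum X H) := {u | u ∈ Skeleton v ∧ DEquivTo u v}

/-- `Sp^D(v)`. -/
def SpD (v : RootDatum X H) : Set (RootDatum X H) := {u | u ∈ Spine v ∧ DEquivTo u v}

/-- `StarRel v u₁ u₂ u₃` says `u₁ * u₂ = u₃`, i.e. `σ^{u₁}(u₂) = u₃`: some path from `v`
ends at `u₂` and its namesake path from `u₁` ends at `u₃`. -/
def StarRel (v u₁ u₂ u₃ : RootDatum X H) : Prop :=
  ∃ ms : List X, IsPath v ms u₂ ∧ IsPath u₁ ms u₃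

/-- `u` is the vertex `w·v` for `w` in the Weyl group. -/
def VertexOf (v : RootDatum X H) (w : Module.Dual ℂ H ≃ₗ[ℂ] Module.Dual ℂ H)
    (u : RootDatum X H) : Prop :=
  u ∈ Skeleton v ∧ ∀ x, u.b x = w (v.b x)

end

/-!
At `v` every simple root is odd isotropic and any two are linked, so after the isotropic
reflexion `r_i` every other simple root becomes anisotropic (`a^{r_i v}_{jj} = 2 a^v_{ji} ≠ 0`):
the spine is the star `{v, r_0 v, r_1 v, r_2 v}`. Rewritten in the simple roots of `r_i v`, the
coefficient vector `k` of `∑ k_j β_j` keeps its entries except `k_i`, which becomes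
`∑ k - 2 k_i`; so `∑ k_j β_j` lies in every `Q^+_u` iff `k ∈ ℕ³` satisfies the triangle
inequalities `2 k_i ≤ ∑ k`. For three indices,
the solutions of parity `e` are exactly `k_j = e + ∑ q - q_j` with `q ∈ ℕ³`, i.e.
`e δ + ∑ q_i α_i`.
-/

theorem _root_.LinearIndependent.add_smul_apply {ι K M : Type*} [Fintype ι] [Field K]
    [AddCommGroup M] [Module K M] {f f' : ι → M} (hf : LinearIndependent K f) {x : ι} {g : ι → K}
    (hg : 1 + g x ≠ 0) (hf' : ∀ y, f' y = f y + g y • f x) : LinearIndependent K f' := by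
  obtain rfl : f' = _ := funext hf'
  rw [Fintype.linearIndependent_iff] at hf ⊢
  intro t ht
  set s := ∑ y, t y * g y
  have hcoeff : ∀ y, t y + (if y = x then s else 0) = 0 := by
    refine hf _ ?_
    simpa [add_smul, Finset.sum_add_distrib, smul_add, ← smul_assoc, ← Finset.sum_smul,
      Finset.sum_ite_eq'] using ht
  have hy : ∀ y, y ≠ x → t y = 0 := fun y hyx => by simpa [hyx] using hcoeff y
  have hs : s = t x * g x :=
    Finset.sum_eq_single x (fun y _ hyx => by simp [hy y hyx]) (by simp)
  have hx : t x * (1 + g x) = 0 := by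
    have := hcoeff x
    simp only [if_true] at this
    linear_combination this - hs
  intro y
  by_cases hyx : y = x
  · subst hyx
    exact (mul_eq_zero.mp hx).resolve_right hg
  · exact hy y hyx

theorem _root_.Fintype.sum_smul_ite_neg_add {ι R M : Type*} [Fintype ι] [DecidableEq ι]
    [CommRing R] [AddCommGroup M] [Module R M] (β : ι → M) (l : ι → R) (i : ι) :
    ∑ j, l j • (if j = i then -β i else β j + β i) =
      ∑ j, Function.update l i (∑ y, l y - 2 * l i) j • β j := by
  have hcompl : ∀ j ∈ ({i}ᶜ : Finset ι), j ≠ i := fun j hj => by simpa using hj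
  have hL : ∑ j ∈ {i}ᶜ, l j • (if j = i then -β i else β j + β i) =
      ∑ j ∈ {i}ᶜ, l j • β j + (∑ j ∈ {i}ᶜ, l j) • β i := by
    rw [Finset.sum_smul, ← Finset.sum_add_distrib]
    exact Finset.sum_congr rfl fun j hj => by rw [if_neg (hcompl j hj), smul_add]
  have hR : ∑ j ∈ {i}ᶜ, Function.update l i (∑ y, l y - 2 * l i) j • β j =
      ∑ j ∈ {i}ᶜ, l j • β j :=
    Finset.sum_congr rfl fun j hj => by rw [Function.update_of_ne (hcompl j hj)]
  rw [Fintype.sum_eq_add_sum_compl i, Fintype.sum_eq_add_sum_compl i (fun j => _ • β j), hL, hR,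
    Fintype.sum_eq_add_sum_compl i l]
  simp only [if_true, Function.update_self]
  module

theorem exists_natCast_coeffs_iff {ι M : Type*} [Fintype ι] [AddCommGroup M] [Module ℂ M]
    {β : ι → M} (hβ : LinearIndependent ℂ β) (c : ι → ℤ) :
    (∃ l : ι → ℕ, ∑ j, (c j : ℂ) • β j = ∑ j, (l j : ℂ) • β j) ↔ ∀ j, 0 ≤ c j := by
  constructor
  · rintro ⟨l, hl⟩ j
    have : (c j : ℂ) = (l j : ℂ) := Fintype.linearIndependent_iffₛ.mp hβ _ _ hl j
    exact_mod_cast this ▸ Nat.cast_nonneg (l j)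
  · intro hc
    refine ⟨fun j => (c j).toNat, Finset.sum_congr rfl fun j _ => ?_⟩
    rw [← Int.cast_natCast, Int.toNat_of_nonneg (hc j)]

theorem exists_intCast_coeffs_iff {ι M : Type*} [Fintype ι] [AddCommGroup M] [Module ℂ M]
    {β : ι → M} (hβ : LinearIndependent ℂ β) (k : ι → ℕ) (P : ℤ → Prop) :
    (∃ l : ι → ℤ, ∑ j, (k j : ℂ) • β j = ∑ j, (l j : ℂ) • β j ∧ P (∑ j, l j)) ↔
      P ((∑ j, k j : ℕ) : ℤ) := by
  constructor
  · rintro ⟨l, hl, hP⟩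
    obtain rfl : l = fun j => (k j : ℤ) := funext fun j => by
      exact_mod_cast (Fintype.linearIndependent_iffₛ.mp hβ _ _ hl j).symm
    rwa [Nat.cast_sum]
  · intro hP
    exact ⟨fun j => k j, by simp, by rwa [Nat.cast_sum] at hP⟩

theorem _root_.Fintype.smul_sum_add_sum_smul_sum_sub {ι R M : Type*} [Fintype ι] [CommRing R]
    [AddCommGroup M] [Module R M] (β : ι → M) (e : R) (q : ι → R) :
    e • ∑ j, β j + ∑ i, q i • (∑ j, β j - β i) = ∑ j, (e + ∑ i, q i - q j) • β j := by
  simp only [smul_sub, sub_smul, add_smul, Finset.sum_sub_distrib, Finset.sum_add_distrib,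
    ← Finset.sum_smul, ← Finset.smul_sum, add_sub_assoc]

section IsotropicReflexion

variable {X : Type*} [Fintype X] {H : Type*} [AddCommGroup H] [Module ℂ H]

/-- `r_x u`. When `a^u_{xy} = 0` the quotient in `a` is `0` by Lean's convention, which gives
the paper's "unchanged" case. -/
noncomputable def RootDatum.isoReflect (u : RootDatum X H) (x : X) : RootDatum X H where
  a y := if y = x then -u.a x else u.a y + (cartan u y x / cartan u x y) • u.a x
  b y := if y = x then -u.b x else if cartan u x y = 0 then u.b y else u.b y + u.b x
  p y := if y ≠ x ∧ cartan u x y ≠ 0 then u.p y + 1 else u.p y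
  lin_indep_a := by
    refine u.lin_indep_a.add_smul_apply (x := x)
      (g := fun y => if y = x then -2 else cartan u y x / cartan u x y) (by norm_num) fun y => ?_
    split_ifs with h
    · subst h; module
    · rfl
  lin_indep_b := by
    refine u.lin_indep_b.add_smul_apply (x := x)
      (g := fun y => if y = x then -2 else if cartan u x y = 0 then 0 else 1) (by norm_num)
      fun y => ?_
    split_ifs with h
    · subst h; module
    · simp
    · simp

omit [Fintype X] in
theorem RootDatum.ext {u u' : RootDatum X H} (ha : u.a = u'.a) (hb : u.b = u'.b)
    (hp : u.p = u'.p) : u = u' := by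
  cases u; cases u'; simp_all

theorem isIsoReflexion_iff {x : X} {u u' : RootDatum X H} :
    IsIsoReflexion x u u' ↔ Reflectable u x ∧ cartan u x x = 0 ∧ u' = u.isoReflect x := by
  constructor
  · rintro ⟨hr, hx, ha, hb, hp, hy⟩
    refine ⟨hr, hx, RootDatum.ext (funext fun y => ?_) (funext fun y => ?_) (funext fun y => ?_)⟩
    all_goals
      by_cases hyx : y = x
      · subst hyx; simp [RootDatum.isoReflect, *]
      by_cases hxy : cartan u x y = 0
      · simp [RootDatum.isoReflect, *, ((hy y hyx).1 hxy)]
      · simp [RootDatum.isoReflect, *, ((hy y hyx).2 hxy)]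
  · rintro ⟨hr, hx, rfl⟩
    refine ⟨hr, hx, by simp [RootDatum.isoReflect], by simp [RootDatum.isoReflect],
      by simp [RootDatum.isoReflect], fun y hyx => ⟨fun hxy => ?_, fun hxy => ?_⟩⟩ <;>
      simp [RootDatum.isoReflect, hyx, hxy]

variable {u : RootDatum X H} {x : X}

theorem cartan_isoReflect_left (hx : cartan u x x = 0) (y : X) :
    cartan (u.isoReflect x) x y = -cartan u x y := by
  simp only [cartan, RootDatum.isoReflect, if_true] at hx ⊢
  by_cases hyx : y = x
  · subst hyx; simp [hx]
  by_cases hxy : u.b y (u.a x) = 0 <;> simp [hyx, hxy, hx]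

theorem cartan_isoReflect_right (hx : cartan u x x = 0) {y : X} (hyx : y ≠ x) :
    cartan (u.isoReflect x) y x = -cartan u y x := by
  simp only [cartan, RootDatum.isoReflect, if_true, hyx, if_false] at hx ⊢
  simp [hx]

theorem cartan_isoReflect_self (hx : cartan u x x = 0) {y : X} (hyx : y ≠ x)
    (hxy : cartan u x y ≠ 0) :
    cartan (u.isoReflect x) y y = cartan u y y + 2 * cartan u y x := by
  simp only [cartan, RootDatum.isoReflect, hyx, if_false] at hx hxy ⊢
  simp only [hxy, if_false, map_add, map_smul, LinearMap.add_apply, smul_eq_mul, hx]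
  field_simp
  ring

theorem isoReflect_isoReflect (hx : cartan u x x = 0) : (u.isoReflect x).isoReflect x = u := by
  refine RootDatum.ext (funext fun y => ?_) (funext fun y => ?_) (funext fun y => ?_)
  all_goals
    by_cases hyx : y = x
    · subst hyx; simp [RootDatum.isoReflect]
  · simp only [RootDatum.isoReflect.eq_1 (u.isoReflect x), hyx, if_false,
      cartan_isoReflect_left hx, cartan_isoReflect_right hx hyx, neg_div_neg_eq]
    simp [RootDatum.isoReflect, hyx]
  all_goals
    by_cases hxy : cartan u x y = 0 <;>
      simp [RootDatum.isoReflect.eq_1 (u.isoReflect x), cartan_isoReflect_left hx, hyx, hxy] <;>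
      simp [RootDatum.isoReflect, hyx, hxy, add_assoc, CharTwo.add_self_eq_zero]

end IsotropicReflexion

section Spine

variable {X : Type*} [Fintype X] {H : Type*} [AddCommGroup H] [Module ℂ H] {v : RootDatum X H}

omit [Fintype X] in
theorem self_mem_spine (v : RootDatum X H) : v ∈ Spine v := ⟨[], .nil v⟩

theorem isoReflect_mem_spine {x : X} (hr : Reflectable v x) (hx : cartan v x x = 0) :
    v.isoReflect x ∈ Spine v :=
  ⟨[x], .cons (isIsoReflexion_iff.mpr ⟨hr, hx, rfl⟩) (.nil _)⟩

theorem spine_eq_insert_range_isoReflect (hdiag : ∀ x, cartan v x x = 0)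
    (hoff : ∀ x y, x ≠ y → cartan v x y ≠ 0) (hp : ∀ x, v.p x = 1) :
    Spine v = insert v (Set.range v.isoReflect) := by
  set S := insert v (Set.range v.isoReflect)
  have step : ∀ {w w' : RootDatum X H} {x : X}, w ∈ S → IsIsoReflexion x w w' → w' ∈ S := by
    intro w w' x hw hr
    obtain ⟨-, hx, rfl⟩ := isIsoReflexion_iff.mp hr
    obtain rfl | ⟨i, rfl⟩ := hw
    · exact Or.inr ⟨x, rfl⟩
    by_cases hxi : x = i
    · subst hxi
      rw [isoReflect_isoReflect (hdiag x)]
      exact Set.mem_insert v _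
    · rw [cartan_isoReflect_self (hdiag i) hxi (hoff i x (Ne.symm hxi)), hdiag x, zero_add] at hx
      exact absurd hx (mul_ne_zero two_ne_zero (hoff x i hxi))
  refine Set.Subset.antisymm ?_ ?_
  · suffices ∀ {w u : RootDatum X H} {ms : List X}, IsIsoPath w ms u → w ∈ S → u ∈ S from
      fun u ⟨_, hpath⟩ => this hpath (Set.mem_insert v _)
    intro w u ms hpath
    induction hpath with
    | nil => exact id
    | cons hr _ ih => exact fun hw => ih (step hw hr)
  · refine Set.insert_subset (self_mem_spine v) (Set.range_subset_iff.mpr fun x => ?_)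
    exact isoReflect_mem_spine (Or.inl ⟨hdiag x, hp x⟩) (hdiag x)

theorem b_eq_ite_isoReflect {i : X} (hi : ∀ j, i ≠ j → cartan v i j ≠ 0) (j : X) :
    v.b j = if j = i then -(v.isoReflect i).b i
      else (v.isoReflect i).b j + (v.isoReflect i).b i := by
  by_cases hji : j = i
  · subst hji; simp [RootDatum.isoReflect]
  · simp [RootDatum.isoReflect, hji, hi j (Ne.symm hji)]

theorem sum_smul_mem_qPlus_isoReflect_iff {i : X} (hi : ∀ j, i ≠ j → cartan v i j ≠ 0)
    (k : X → ℕ) :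
    ∑ j, (k j : ℂ) • v.b j ∈ QPlus (v.isoReflect i) ↔ 2 * k i ≤ ∑ j, k j := by
  set c : X → ℤ := Function.update (fun j => (k j : ℤ)) i (∑ j, (k j : ℤ) - 2 * k i)
  have hμ : ∑ j, (k j : ℂ) • v.b j = ∑ j, (c j : ℂ) • (v.isoReflect i).b j := by
    simp_rw [b_eq_ite_isoReflect hi, Fintype.sum_smul_ite_neg_add]
    refine Finset.sum_congr rfl fun j _ => ?_
    by_cases hji : j = i
    · subst hji; simp [c]
    · simp [c, hji]
  rw [QPlus, hμ, Set.mem_ofPred_eq,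
    exists_natCast_coeffs_iff (v.isoReflect i).lin_indep_b, Function.forall_update_iff]
  simp only [ne_eq, Nat.cast_nonneg, implies_true, and_true, sub_nonneg]
  exact_mod_cast Iff.rfl

theorem iInter_spine_qPlus_eq (hdiag : ∀ x, cartan v x x = 0)
    (hoff : ∀ x y, x ≠ y → cartan v x y ≠ 0) (hp : ∀ x, v.p x = 1) :
    ⋂ u ∈ Spine v, QPlus u =
      {μ | ∃ k : X → ℕ, μ = ∑ j, (k j : ℂ) • v.b j ∧ ∀ i, 2 * k i ≤ ∑ j, k j} := by
  rw [spine_eq_insert_range_isoReflect hdiag hoff hp, Set.biInter_insert, Set.biInter_range]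
  ext μ
  simp only [Set.mem_inter_iff, Set.mem_iInter]
  constructor
  · rintro ⟨⟨k, rfl⟩, hk⟩
    exact ⟨k, rfl, fun i => (sum_smul_mem_qPlus_isoReflect_iff (hoff i) k).mp (hk i)⟩
  · rintro ⟨k, rfl, hk⟩
    exact ⟨⟨k, rfl⟩, fun i => (sum_smul_mem_qPlus_isoReflect_iff (hoff i) k).mpr (hk i)⟩

end Spine

theorem fin_three_triangle_mod_two_iff {e : ℕ} (he : e < 2) (k : Fin 3 → ℕ) :
    ((∀ i, 2 * k i ≤ ∑ j, k j) ∧ (∑ j, k j) % 2 = e) ↔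
      ∃ q : Fin 3 → ℕ, ∀ j, k j + q j = e + ∑ i, q i := by
  simp only [Fin.sum_univ_three]
  constructor
  · rintro ⟨htri, hpar⟩
    have := htri 0; have := htri 1; have := htri 2
    set s := (k 0 + k 1 + k 2) / 2
    refine ⟨![s - k 0, s - k 1, s - k 2], fun j => ?_⟩
    fin_cases j <;> simp <;> omega
  · rintro ⟨q, hq⟩
    have := hq 0; have := hq 1; have := hq 2
    exact ⟨fun i => by fin_cases i <;> simp <;> omega, by omega⟩

theorem fin_three_exists_triangle_coeffs_iff {M : Type*} [AddCommGroup M] [Module ℂ M]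
    (β : Fin 3 → M) {e : ℕ} (he : e < 2) (μ : M) :
    (∃ k : Fin 3 → ℕ, μ = ∑ j, (k j : ℂ) • β j ∧
        (∀ i, 2 * k i ≤ ∑ j, k j) ∧ (∑ j, k j) % 2 = e) ↔
      ∃ q : Fin 3 → ℕ, μ = (e : ℂ) • ∑ j, β j + ∑ i, (q i : ℂ) • (∑ j, β j - β i) := by
  simp_rw [Fintype.smul_sum_add_sum_smul_sum_sub, fin_three_triangle_mod_two_iff he]
  have hcast : ∀ (k q : Fin 3 → ℕ) (j : Fin 3), k j + q j = e + ∑ i, q i →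
      (k j : ℂ) = e + ∑ i, (q i : ℂ) - q j := fun k q j h =>
    eq_sub_of_add_eq (by exact_mod_cast h)
  constructor
  · rintro ⟨k, rfl, q, hq⟩
    exact ⟨q, Finset.sum_congr rfl fun j _ => by rw [hcast k q j (hq j)]⟩
  · rintro ⟨q, rfl⟩
    have hq : ∀ j, q j ≤ e + ∑ i, q i := fun j =>
      le_add_left (Finset.single_le_sum (fun _ _ => Nat.zero_le _) (Finset.mem_univ j))
    refine ⟨fun j => e + ∑ i, q i - q j, Finset.sum_congr rfl fun j _ => ?_,
      q, fun j => Nat.sub_add_cancel (hq j)⟩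
    rw [hcast (fun j => e + ∑ i, q i - q j) q j (Nat.sub_add_cancel (hq j))]

theorem sep_parity_iInter_spine_qPlus_eq {H : Type*} [AddCommGroup H] [Module ℂ H]
    {v : RootDatum (Fin 3) H} (hdiag : ∀ x, cartan v x x = 0)
    (hoff : ∀ x y, x ≠ y → cartan v x y ≠ 0) (hp : ∀ x, v.p x = 1) {e : ℕ} (he : e < 2)
    {P : ℤ → Prop} (hP : ∀ n : ℕ, P n ↔ n % 2 = e) :
    {μ ∈ ⋂ u ∈ Spine v, QPlus u | ∃ l : Fin 3 → ℤ, μ = ∑ i, (l i : ℂ) • v.b i ∧ P (∑ i, l i)} =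
      {μ | ∃ q : Fin 3 → ℕ, μ = (e : ℂ) • ∑ j, v.b j + ∑ i, (q i : ℂ) • (∑ j, v.b j - v.b i)} := by
  rw [iInter_spine_qPlus_eq hdiag hoff hp]
  ext μ
  refine Iff.trans ?_ (fin_three_exists_triangle_coeffs_iff v.b he μ)
  constructor
  · rintro ⟨⟨k, rfl, hk⟩, hl⟩
    exact ⟨k, rfl, hk, (hP _).mp ((exists_intCast_coeffs_iff v.lin_indep_b k P).mp hl)⟩
  · rintro ⟨k, rfl, hk, hpar⟩
    exact ⟨⟨k, rfl, hk⟩, (exists_intCast_coeffs_iff v.lin_indep_b k P).mpr ((hP _).mpr hpar)⟩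

theorem stmt12_general {H : Type*} [AddCommGroup H] [Module ℂ H]
    (a b c : ℂ) (ha : a ≠ 0) (hb : b ≠ 0) (hc : c ≠ 0)
    (v : RootDatum (Fin 3) H)
    (hp : ∀ i, v.p i = 1)
    (h00 : cartan v 0 0 = 0) (h01 : cartan v 0 1 = a) (h02 : cartan v 0 2 = 1)
    (h10 : cartan v 1 0 = 1) (h11 : cartan v 1 1 = 0) (h12 : cartan v 1 2 = b)
    (h20 : cartan v 2 0 = c) (h21 : cartan v 2 1 = 1) (h22 : cartan v 2 2 = 0) :
    {μ ∈ (⋂ u ∈ Spine v, QPlus u) |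
        ∃ k : Fin 3 → ℤ, μ = (∑ i, (k i : ℂ) • v.b i) ∧ Even (∑ i, k i)} =
      {μ | ∃ k : Fin 3 → ℕ,
        μ = ∑ i, (k i : ℂ) • ((v.b 0 + v.b 1 + v.b 2) - v.b i)} ∧
    {μ ∈ (⋂ u ∈ Spine v, QPlus u) |
        ∃ k : Fin 3 → ℤ, μ = (∑ i, (k i : ℂ) • v.b i) ∧ Odd (∑ i, k i)} =
      (fun ν => (v.b 0 + v.b 1 + v.b 2) + ν) ''
        {μ | ∃ k : Fin 3 → ℕ,
          μ = ∑ i, (k i : ℂ) • ((v.b 0 + v.b 1 + v.b 2) - v.b i)} := by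
  have hdiag : ∀ x, cartan v x x = 0 := by
    intro x; fin_cases x <;> assumption
  have hoff : ∀ x y, x ≠ y → cartan v x y ≠ 0 := by
    intro x y; fin_cases x <;> fin_cases y <;> simp [*]
  have hδ : v.b 0 + v.b 1 + v.b 2 = ∑ j, v.b j := (Fin.sum_univ_three _).symm
  rw [hδ, sep_parity_iInter_spine_qPlus_eq hdiag hoff hp (e := 0) (by norm_num)
      fun n => by rw [Int.even_coe_nat, Nat.even_iff],
    sep_parity_iInter_spine_qPlus_eq hdiag hoff hp (e := 1) (by norm_num)
      fun n => by rw [Int.odd_coe_nat, Nat.odd_iff]]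
  refine ⟨by simp, Set.ext fun μ => ⟨?_, ?_⟩⟩
  · rintro ⟨q, rfl⟩
    exact ⟨_, ⟨q, rfl⟩, by simp⟩
  · rintro ⟨_, ⟨q, rfl⟩, rfl⟩
    exact ⟨q, by simp⟩

/-- For the component `Q^±(m,n,t)`, with the parity homomorphism
`p : Q_v → ℤ/2` (`p(β_i) = 1`): the even part of `⋂_{u ∈ Sp(v)} Q^+_u` equals `Q^+(π)`
and the odd part equals `δ + Q^+(π)`. -/
theorem stmt12 {H : Type*} [AddCommGroup H] [Module ℂ H] [FiniteDimensional ℂ H]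
    (m n t : ℕ) (hm : 0 < m) (hn : 0 < n) (ht : 0 < t) (hmnt : 1 < m * n * t)
    (a b c : ℂ) (ha : a ≠ 0) (hb : b ≠ 0) (hc : c ≠ 0)
    (hra : 1 + a + 1 / c = -(m : ℂ)) (hrb : 1 + b + 1 / a = -(n : ℂ))
    (hrc : 1 + c + 1 / b = -(t : ℂ))
    (v : RootDatum (Fin 3) H) (hdim : Module.finrank ℂ H = 3)
    (hp : ∀ i, v.p i = 1)
    (h00 : cartan v 0 0 = 0) (h01 : cartan v 0 1 = a) (h02 : cartan v 0 2 = 1)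
    (h10 : cartan v 1 0 = 1) (h11 : cartan v 1 1 = 0) (h12 : cartan v 1 2 = b)
    (h20 : cartan v 2 0 = c) (h21 : cartan v 2 1 = 1) (h22 : cartan v 2 2 = 0) :
    {μ ∈ (⋂ u ∈ Spine v, QPlus u) |
        ∃ k : Fin 3 → ℤ, μ = (∑ i, (k i : ℂ) • v.b i) ∧ Even (∑ i, k i)} =
      {μ | ∃ k : Fin 3 → ℕ,
        μ = ∑ i, (k i : ℂ) • ((v.b 0 + v.b 1 + v.b 2) - v.b i)} ∧
    {μ ∈ (⋂ u ∈ Spine v, QPlus u) |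
        ∃ k : Fin 3 → ℤ, μ = (∑ i, (k i : ℂ) • v.b i) ∧ Odd (∑ i, k i)} =
      (fun ν => (v.b 0 + v.b 1 + v.b 2) + ν) ''
        {μ | ∃ k : Fin 3 → ℕ,
          μ = ∑ i, (k i : ℂ) • ((v.b 0 + v.b 1 + v.b 2) - v.b i)} :=
  stmt12_general a b c ha hb hc v hp h00 h01 h02 h10 h11 h12 h20 h21 h22
end KMS
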